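/- arXiv:2111.00182 — 6 statements merged into one kernel-verified Lean document; each statement's English description precedes it below -/
import Mathlib

section
/- In a ring R with a central element c and a sequence S : ℕ → R satisfying S 0 = 1, S 1 = s, and S (n+1) = S n * s - c * S (n-1) for n ≥ 1 (with s commuting with c), one has for all n ≥ m ≥ 1 the product formula S m * S n = ∑_{k=0}^{m} c^k * S (n + m - 2k), i.e. S m * S n = S (n+m) + c * S (n+m-2) + ⋯ + c^{m-1} * S (n-m+2) + c^m * S (n-m). -/
/-!
Expanding `s * S (n + 1) = S (n + 2) + c * S n` inside `S (m + 2) * S (n + 1)` gives the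
two-term identity `S (m + 1) * S (n + 1) = S (m + n + 2) + c * (S m * S n)`; iterating it
`m` times peels off one summand `c ^ k * S (n + m - 2 * k)` at each step and ends at
`c ^ m * S 0 * S (n - m)`.
-/

structure IsChebyshevU {R : Type*} [Ring R] (c s : R) (S : ℕ → R) : Prop where
  zero : S 0 = 1
  one : S 1 = s
  add_two : ∀ n, S (n + 2) = S (n + 1) * s - c * S n

namespace IsChebyshevU

variable {R : Type*} [Ring R] {c s : R} {S : ℕ → R}

theorem commute (h : IsChebyshevU c s S) (hcs : Commute c s) : ∀ n, Commute s (S n)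
  | 0 => by rw [h.zero]; exact Commute.one_right s
  | 1 => by rw [h.one]
  | n + 2 => by
    rw [h.add_two]
    exact ((h.commute hcs (n + 1)).mul_right (Commute.refl s)).sub_right
      (hcs.symm.mul_right (h.commute hcs n))

theorem mul_add_one (h : IsChebyshevU c s S) (hcs : Commute c s) (n : ℕ) :
    s * S (n + 1) = S (n + 2) + c * S n := by
  rw [h.add_two, (h.commute hcs (n + 1)).eq, sub_add_cancel]

theorem add_one_mul_add_one (h : IsChebyshevU c s S) (hc : ∀ r, Commute c r) (m n : ℕ) :
    S (m + 1) * S (n + 1) = S (m + n + 2) + c * (S m * S n) := by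
  induction m generalizing n with
  | zero => rw [h.one, h.mul_add_one (hc s), h.zero, one_mul, zero_add]
  | succ m ih =>
    calc S (m + 2) * S (n + 1)
        = S (m + 1) * (s * S (n + 1)) - c * (S m * S (n + 1)) := by
          rw [h.add_two, sub_mul, mul_assoc, mul_assoc]
      _ = S (m + 1) * S (n + 2) + c * (S (m + 1) * S n) - c * (S m * S (n + 1)) := by
          rw [h.mul_add_one (hc s), mul_add, ← mul_assoc, ← (hc _).eq, mul_assoc]
      _ = S (m + 1 + n + 2) + c * (S (m + 1) * S n) := by
          rw [ih, show m + (n + 1) + 2 = m + 1 + n + 2 by omega]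
          abel

theorem mul_eq_sum (h : IsChebyshevU c s S) (hc : ∀ r, Commute c r) {m n : ℕ} (hmn : m ≤ n) :
    S m * S n = ∑ k ∈ Finset.range (m + 1), c ^ k * S (n + m - 2 * k) := by
  induction m generalizing n with
  | zero => simp [h.zero]
  | succ m ih =>
    obtain ⟨n, rfl⟩ : ∃ n', n = n' + 1 := ⟨n - 1, by omega⟩
    rw [h.add_one_mul_add_one hc, ih (by omega), Finset.sum_range_succ' _ (m + 1), Finset.mul_sum,
      add_comm]
    congr 1
    · refine Finset.sum_congr rfl fun k _ => ?_
      rw [← mul_assoc, ← pow_succ', show n + 1 + (m + 1) - 2 * (k + 1) = n + m - 2 * k by omega]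
    · rw [pow_zero, one_mul, show n + 1 + (m + 1) - 2 * 0 = m + n + 2 by omega]

end IsChebyshevU

theorem chebyshev_second_kind_product_general
    (R : Type*) [Ring R] (c s : R)
    (hc : ∀ r : R, c * r = r * c)
    (S : ℕ → R) (hS0 : S 0 = 1) (hS1 : S 1 = s)
    (hrec : ∀ n : ℕ, 1 ≤ n → S (n + 1) = S n * s - c * S (n - 1)) :
    ∀ m n : ℕ, 1 ≤ m → m ≤ n →
      S m * S n = ∑ k ∈ Finset.range (m + 1), c ^ k * S (n + m - 2 * k) := by
  have hS : IsChebyshevU c s S := ⟨hS0, hS1, fun n => hrec (n + 1) n.succ_pos⟩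
  intro m n _ hmn
  exact hS.mul_eq_sum hc hmn

/-- Proposition 3.3: product formula for the modified Chebyshev polynomials of the
second kind: for n ≥ m ≥ 1, S m * S n = ∑_{k=0}^{m} c^k * S (n + m - 2k). -/
theorem chebyshev_second_kind_product
    (R : Type*) [Ring R] (c s : R)
    (hc : ∀ r : R, c * r = r * c)
    (hsc : s * c = c * s)
    (S : ℕ → R) (hS0 : S 0 = 1) (hS1 : S 1 = s)
    (hrec : ∀ n : ℕ, 1 ≤ n → S (n + 1) = S n * s - c * S (n - 1)) :
    ∀ m n : ℕ, 1 ≤ m → m ≤ n →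
      S m * S n = ∑ k ∈ Finset.range (m + 1), c ^ k * S (n + m - 2 * k) :=
  chebyshev_second_kind_product_general R c s hc S hS0 hS1 hrec
end

section
/- Let R be a ℤ[q^{±1/2}]-algebra containing elements y₁, s, and a central element c with relations y₁ * s = q⁻¹ * s * y₁ and y₁ * c = q⁻² * c * y₁ (equivalently c = q·y₁·y₂ with y₂ s = q s y₂). Define S 0 = 1, S 1 = s, S (n+1) = S n * s - c * S (n-1). Then y₁ * S n = q⁻ⁿ * S n * y₁ for all n ≥ 0. -/
/-!
Twisting factors `w` in `y x = w x y` multiply along products (once the second factor is moved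
past the first element, which is free for central `q`) and are preserved by differences. As `y₁`
twists `s` by `q⁻¹` and `c` by `q⁻²`, both terms of `S (n+2) = S (n+1) s - c S n` are twisted by
`q^{-(n+2)}` as soon as `S (n+1)` and `S n` satisfy the claim, and two-step induction concludes.
-/

def QCommute {R : Type*} [Mul R] (w y x : R) : Prop :=
  y * x = w * x * y

namespace QCommute

theorem mul {M : Type*} [Monoid M] {w₁ w₂ y a b : M} (ha : QCommute w₁ y a)
    (hb : QCommute w₂ y b) (hw₂a : Commute w₂ a) : QCommute (w₁ * w₂) y (a * b) :=
  calc y * (a * b) = w₁ * a * (w₂ * b * y) := by rw [← mul_assoc, ha, ← hb, mul_assoc]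
    _ = w₁ * (a * w₂) * b * y := by simp only [mul_assoc]
    _ = w₁ * w₂ * (a * b) * y := by rw [← hw₂a.eq]; simp only [mul_assoc]

theorem sub {R : Type*} [NonUnitalNonAssocRing R] {w y a b : R} (ha : QCommute w y a)
    (hb : QCommute w y b) : QCommute w y (a - b) := by
  unfold QCommute at *
  rw [mul_sub, ha, hb, mul_sub, sub_mul]

end QCommute

theorem y1_qcommutes_with_Sn_general
    (R : Type*) [Ring R] (q : Rˣ)
    (hq : ∀ r : R, (q : R) * r = r * (q : R))
    (y₁ c s : R)
    (hy₁s : y₁ * s = (↑q⁻¹ : R) * s * y₁)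
    (hy₁c : y₁ * c = (↑q⁻¹ : R) ^ 2 * c * y₁)
    (S : ℕ → R) (hS0 : S 0 = 1) (hS1 : S 1 = s)
    (hrec : ∀ n : ℕ, 1 ≤ n → S (n + 1) = S n * s - c * S (n - 1)) :
    ∀ n : ℕ, y₁ * S n = (↑q⁻¹ : R) ^ n * S n * y₁ := by
  have hcentral : ∀ r : R, Commute (↑q⁻¹ : R) r := fun r => Commute.units_inv_left (hq r)
  refine Nat.twoStepInduction ?_ ?_ fun m ihm ihm1 => ?_
  · simp [hS0]
  · simpa [hS1] using hy₁s
  have hleft : QCommute ((↑q⁻¹ : R) ^ (m + 2)) y₁ (S (m + 1) * s) := by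
    rw [pow_succ]
    exact QCommute.mul ihm1 hy₁s (hcentral _)
  have hright : QCommute ((↑q⁻¹ : R) ^ (m + 2)) y₁ (c * S m) := by
    rw [add_comm, pow_add]
    exact QCommute.mul hy₁c ihm ((hcentral c).pow_left m)
  rw [hrec (m + 1) (by omega)]
  exact hleft.sub hright

/-- Lemma 3.1(1): y₁ q-commutes with every S n with exponent -n. -/
theorem y1_qcommutes_with_Sn
    (R : Type*) [Ring R] (q : Rˣ)
    (hq : ∀ r : R, (q : R) * r = r * (q : R))
    (y₁ c s : R)
    (hc : ∀ r : R, c * r = r * c)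
    (hy₁s : y₁ * s = (↑q⁻¹ : R) * s * y₁)
    (hy₁c : y₁ * c = (↑q⁻¹ : R) ^ 2 * c * y₁)
    (S : ℕ → R) (hS0 : S 0 = 1) (hS1 : S 1 = s)
    (hrec : ∀ n : ℕ, 1 ≤ n → S (n + 1) = S n * s - c * S (n - 1)) :
    ∀ n : ℕ, y₁ * S n = (↑q⁻¹ : R) ^ n * S n * y₁ :=
  y1_qcommutes_with_Sn_general R q hq y₁ c s hy₁s hy₁c S hS0 hS1 hrec
end

section
/- Let R be a ring with a central element c, an element s, and a sequence x : ℤ → R (indexed over nonpositive integers) satisfying s * x 0 = x (-1) + p and s * x (-m) = x (-(m+1)) + c * x (-(m-1)) for all m ≥ 1, where p commutes appropriately. Define S 0 = 1, S 1 = s, S (n+1) = S n * s - c * S (n-1), with c central. Then for all n ≥ 1 and m ≥ 1: S n * x (-m) = x (-(m+n)) + c * S (n-1) * x (-(m-1)), and S n * x 0 = x (-n) + S (n-1) * p. -/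
/-!
Both identities follow by induction on `n` from the three-term recurrence of `S`: expanding
`S (n + 2) * x (-m) = S (n + 1) * (s * x (-m)) - c * S n * x (-m)` with the exchange relation for
`s * x (-m)` and the induction hypothesis at `m + 1` makes the two `c * S n * x (-m)` terms cancel.
Centrality of `c` is what lets it be pulled out in front of `S (n + 1)`.
-/

section ChebyshevRecurrence

variable {R : Type*} [Ring R] {c s : R} {x : ℤ → R} {S : ℕ → R}

theorem chebyshev_succ_mul_neg (hc : ∀ r : R, Commute c r)
    (hxm : ∀ m : ℤ, 1 ≤ m → s * x (-m) = x (-(m + 1)) + c * x (-(m - 1)))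
    (hS0 : S 0 = 1) (hS1 : S 1 = s) (hrec : ∀ n : ℕ, S (n + 2) = S (n + 1) * s - c * S n)
    (n : ℕ) : ∀ m : ℤ, 1 ≤ m →
      S (n + 1) * x (-m) = x (-(m + (n + 1))) + c * (S n * x (-(m - 1))) := by
  induction n with
  | zero =>
    intro m hm
    simpa [hS0, hS1] using hxm m hm
  | succ n ih =>
    intro m hm
    have hshift := ih (m + 1) (by omega)
    rw [add_sub_cancel_right] at hshift
    calc S (n + 1 + 1) * x (-m)
        = S (n + 1) * (s * x (-m)) - c * (S n * x (-m)) := by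
          rw [hrec, sub_mul, mul_assoc, mul_assoc]
      _ = S (n + 1) * x (-(m + 1)) + c * (S (n + 1) * x (-(m - 1))) - c * (S n * x (-m)) := by
          rw [hxm m hm, mul_add, (hc _).symm.left_comm]
      _ = x (-(m + ((n + 1 : ℕ) + 1))) + c * (S (n + 1) * x (-(m - 1))) := by
          rw [hshift, show m + 1 + (n + 1 : ℤ) = m + ((n + 1 : ℕ) + 1) by push_cast; ring]
          abel

theorem chebyshev_succ_mul_zero {p : R} (hc : ∀ r : R, Commute c r)
    (hx0 : s * x 0 = x (-1) + p)
    (hxm : ∀ m : ℤ, 1 ≤ m → s * x (-m) = x (-(m + 1)) + c * x (-(m - 1)))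
    (hS0 : S 0 = 1) (hS1 : S 1 = s) (hrec : ∀ n : ℕ, S (n + 2) = S (n + 1) * s - c * S n)
    (n : ℕ) : S (n + 1) * x 0 = x (-(n + 1)) + S n * p := by
  cases n with
  | zero => simpa [hS0, hS1] using hx0
  | succ n =>
    have hstep := chebyshev_succ_mul_neg hc hxm hS0 hS1 hrec n 1 le_rfl
    rw [sub_self, neg_zero] at hstep
    calc S (n + 1 + 1) * x 0
        = S (n + 1) * (s * x 0) - c * (S n * x 0) := by
          rw [hrec, sub_mul, mul_assoc, mul_assoc]
      _ = x (-((n + 1 : ℕ) + 1)) + S (n + 1) * p := by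
          rw [hx0, mul_add, hstep, show 1 + (n + 1 : ℤ) = (n + 1 : ℕ) + 1 by push_cast; ring]
          abel

end ChebyshevRecurrence

/-- Theorem 3.6(1)-(2): recursive formulas S n x_{-m} = x_{-(m+n)} + c S_{n-1} x_{-(m-1)}
and S n x_0 = x_{-n} + S_{n-1} p. -/
theorem Sn_times_negative_cluster_variables
    (R : Type*) [Ring R] (c s p : R)
    (hc : ∀ r : R, c * r = r * c)
    (x : ℤ → R)
    (hx0 : s * x 0 = x (-1) + p)
    (hxm : ∀ m : ℤ, 1 ≤ m → s * x (-m) = x (-(m + 1)) + c * x (-(m - 1)))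
    (S : ℕ → R) (hS0 : S 0 = 1) (hS1 : S 1 = s)
    (hrec : ∀ n : ℕ, 1 ≤ n → S (n + 1) = S n * s - c * S (n - 1)) :
    (∀ n m : ℕ, 1 ≤ n → 1 ≤ m →
      S n * x (-(m : ℤ)) = x (-((m : ℤ) + (n : ℤ))) + c * (S (n - 1) * x (-((m : ℤ) - 1)))) ∧
    (∀ n : ℕ, 1 ≤ n → S n * x 0 = x (-(n : ℤ)) + S (n - 1) * p) := by
  have hrec' : ∀ n : ℕ, S (n + 2) = S (n + 1) * s - c * S n := fun n => hrec (n + 1) n.succ_pos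
  constructor
  · intro n m hn hm
    obtain ⟨n, rfl⟩ := Nat.exists_eq_add_of_le' hn
    simpa using chebyshev_succ_mul_neg hc hxm hS0 hS1 hrec' n m (by exact_mod_cast hm)
  · intro n hn
    obtain ⟨n, rfl⟩ := Nat.exists_eq_add_of_le' hn
    simpa using chebyshev_succ_mul_zero hc hx0 hxm hS0 hS1 hrec' n
end

section
/- Let R be a ring with a central element c, an element s, and elements x : ℤ → R satisfying x m * s = x (m+1) + x (m-1) * c for all m ≥ 2 and x 1 * s = x 2 + r for a given element r with suitable commutation with s and c (namely s * r = r' where r' satisfies the analogous recursion). Define S 0 = 1, S 1 = s, S (n+1) = S n * s - c * S (n-1). Then for all n ≥ 1 and m ≥ 2: x m * S n = x (n+m) + x (m-1) * c * S (n-1). -/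
/-!
Fix `m ≥ 2`. Both sides of the identity, as functions of `n ≥ 1`, satisfy the recursion
`u (k + 2) = u (k + 1) * s - u k * c` of the `S n`: the left side because left multiplication by
`x m` preserves it, the right side because `k ↦ x (k + m)` satisfies it by the exchange relation
and `k ↦ S k` does since `c` is central. Such a sequence is determined by its first two terms,
and these agree by the exchange relation at `m` and `m + 1`.
-/

section ChebyshevRecursion

variable {R : Type*} [Ring R] (s c : R)

def SatisfiesChebyshevRec (u : ℕ → R) : Prop :=
  ∀ k, u (k + 2) = u (k + 1) * s - u k * c

variable {s c}

theorem SatisfiesChebyshevRec.ext {u v : ℕ → R} (hu : SatisfiesChebyshevRec s c u)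
    (hv : SatisfiesChebyshevRec s c v) (h0 : u 0 = v 0) (h1 : u 1 = v 1) : u = v := by
  have hpair : ∀ k, u k = v k ∧ u (k + 1) = v (k + 1) := by
    intro k
    induction k with
    | zero => exact ⟨h0, h1⟩
    | succ k ih => exact ⟨ih.2, by rw [hu, hv, ih.1, ih.2]⟩
  exact funext fun k => (hpair k).1

theorem SatisfiesChebyshevRec.mul_left {u : ℕ → R} (hu : SatisfiesChebyshevRec s c u) (a : R) :
    SatisfiesChebyshevRec s c (fun k => a * u k) := fun k => by
  simp only [hu k, mul_sub, mul_assoc]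

theorem SatisfiesChebyshevRec.add {u v : ℕ → R} (hu : SatisfiesChebyshevRec s c u)
    (hv : SatisfiesChebyshevRec s c v) : SatisfiesChebyshevRec s c (fun k => u k + v k) :=
  fun k => by
    show u (k + 2) + v (k + 2) = (u (k + 1) + v (k + 1)) * s - (u k + v k) * c
    rw [hu k, hv k]; noncomm_ring

theorem satisfiesChebyshevRec_comp_add {x : ℤ → R} {m₀ : ℤ}
    (hx : ∀ m, m₀ ≤ m → x m * s = x (m + 1) + x (m - 1) * c) (a : ℤ) (ha : m₀ ≤ a + 1) :
    SatisfiesChebyshevRec s c (fun k : ℕ => x (k + a)) := fun k => by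
  push_cast
  rw [show (k : ℤ) + 2 + a = k + 1 + a + 1 by ring, show (k : ℤ) + a = k + 1 + a - 1 by ring,
    hx _ (by omega), add_sub_cancel_right]

end ChebyshevRecursion

theorem positive_cluster_variable_times_Sn_general
    (R : Type*) [Ring R] (c s : R)
    (hc : ∀ t : R, c * t = t * c)
    (x : ℤ → R)
    (hxm : ∀ m : ℤ, 2 ≤ m → x m * s = x (m + 1) + x (m - 1) * c)
    (S : ℕ → R) (hS0 : S 0 = 1) (hS1 : S 1 = s)
    (hrec : ∀ n : ℕ, 1 ≤ n → S (n + 1) = S n * s - c * S (n - 1)) :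
    ∀ (n : ℕ) (m : ℤ), 1 ≤ n → 2 ≤ m →
      x m * S n = x ((n : ℤ) + m) + x (m - 1) * c * S (n - 1) := by
  intro n m hn hm
  obtain ⟨n, rfl⟩ : ∃ k, n = k + 1 := ⟨n - 1, by omega⟩
  have hS : SatisfiesChebyshevRec s c S := fun k => by
    rw [hrec (k + 1) le_add_self, hc]; rfl
  have hx := satisfiesChebyshevRec_comp_add hxm (m + 1) (by omega)
  have hxm' : x (m + 1) * s = x ((1 : ℕ) + (m + 1)) + x m * c := by
    rw [hxm (m + 1) (by omega)]; push_cast; ring_nf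
  have hS_succ : SatisfiesChebyshevRec s c (fun k => S (k + 1)) := fun k => hS (k + 1)
  have key : (fun k : ℕ => x m * S (k + 1)) = fun k : ℕ => x (k + (m + 1)) + x (m - 1) * c * S k :=
    SatisfiesChebyshevRec.ext (hS_succ.mul_left _) (hx.add (hS.mul_left _))
      (by simp [hS1, hS0, hxm m hm])
      (by
        rw [hS 0, hS1, hS0, one_mul, mul_sub, ← mul_assoc, hxm m hm, add_mul, hxm']
        abel)
  simpa [add_assoc, add_comm 1 m] using congrFun key n

/-- Theorem 3.6(4): x m S n = x (n+m) + x (m-1) c S (n-1) for n ≥ 1 and m ≥ 2. -/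
theorem positive_cluster_variable_times_Sn
    (R : Type*) [Ring R] (c s r : R)
    (hc : ∀ t : R, c * t = t * c)
    (x : ℤ → R)
    (hxm : ∀ m : ℤ, 2 ≤ m → x m * s = x (m + 1) + x (m - 1) * c)
    (hx1 : x 1 * s = x 2 + r)
    (S : ℕ → R) (hS0 : S 0 = 1) (hS1 : S 1 = s)
    (hrec : ∀ n : ℕ, 1 ≤ n → S (n + 1) = S n * s - c * S (n - 1)) :
    ∀ (n : ℕ) (m : ℤ), 1 ≤ n → 2 ≤ m →
      x m * S n = x ((n : ℤ) + m) + x (m - 1) * c * S (n - 1) :=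
  positive_cluster_variable_times_Sn_general R c s hc x hxm S hS0 hS1 hrec
end

section
/- Let R be a ring with a central element c, an element s, and sequences x : ℤ → R and F : ℕ → R with F 0 = 1, F 1 = s, F 2 = s*s - 2c, F (n+1) = F n * s - c * F (n-1) for n ≥ 2. Assume the exchange relations s * x (-m) = x (-(m+1)) + c * x (-(m-1)) hold for all m ≥ 1, together with the base cases F 1 * x (-n) = x (-(n+1)) + c * x (-(n-1)) for n ≥ 1. Then for all 1 ≤ m ≤ n: F m * x (-n) = x (-(n+m)) + c^m * x (-(n-m)). -/
/-!
Reindexing `y n = x (-n)`, the exchange relations say that multiplication by `s` acts on `y` as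
the three-term operator `y n ↦ y (n + 1) + c * y (n - 1)`. Setting `F 0 = 2` instead of `1` makes
the Chebyshev recursion `F (k + 2) = F (k + 1) * s - c * F k` hold from `k = 0` on, and the
identity `F m * y n = y (n + m) + c ^ m * y (n - m)` then also holds for `m = 0`; a two-step
induction on `m` proves it for all `m ≤ n`, the central `c` passing freely through `F`.
-/

section ThreeTermRecursion

variable {R : Type*} [Ring R] {c s : R} {F : ℕ → R} {y : ℤ → R}

theorem chebyshev_mul_eq_of_three_term (hc : ∀ r : R, Commute c r)
    (hF0 : F 0 = 2) (hF1 : F 1 = s) (hFrec : ∀ k, F (k + 2) = F (k + 1) * s - c * F k)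
    (hy : ∀ n : ℤ, 1 ≤ n → s * y n = y (n + 1) + c * y (n - 1)) (m : ℕ) :
    ∀ n : ℤ, (m : ℤ) ≤ n → F m * y n = y (n + m) + c ^ m * y (n - m) := by
  induction m using Nat.twoStepInduction with
  | zero => intro n _; simp [hF0, two_mul]
  | one => intro n hn; simpa [hF1] using hy n hn
  | more k ih₀ ih₁ =>
    intro n hn
    push_cast at hn ⊢
    have hup := ih₁ (n + 1) (by push_cast; omega)
    have hdown := ih₁ (n - 1) (by push_cast; omega)
    have hmid := ih₀ n (by omega)
    push_cast at hup hdown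
    rw [show n + 1 + (k + 1) = n + (k + 2) by ring, show n + 1 - (k + 1) = n - k by ring] at hup
    rw [show n - 1 + (k + 1) = n + k by ring, show n - 1 - (k + 1) = n - (k + 2) by ring] at hdown
    calc F (k + 2) * y n = F (k + 1) * (s * y n) - c * (F k * y n) := by
          rw [hFrec]; noncomm_ring
      _ = F (k + 1) * y (n + 1) + c * (F (k + 1) * y (n - 1)) - c * (F k * y n) := by
          rw [hy n (by omega), mul_add, ← mul_assoc, ← (hc _).eq, mul_assoc]
      _ = y (n + (k + 2)) + c ^ (k + 2) * y (n - (k + 2)) := by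
          rw [hup, hdown, hmid, pow_succ' c (k + 1), pow_succ' c k]
          noncomm_ring

end ThreeTermRecursion

theorem Fm_times_negative_cluster_variable_general
    (R : Type*) [Ring R] (c s : R)
    (hc : ∀ r : R, c * r = r * c)
    (x : ℤ → R)
    (F : ℕ → R) (hF1 : F 1 = s)
    (hF2 : F 2 = s * s - 2 * c)
    (hFrec : ∀ n : ℕ, 2 ≤ n → F (n + 1) = F n * s - c * F (n - 1))
    (hexch : ∀ m : ℤ, 1 ≤ m → s * x (-m) = x (-(m + 1)) + c * x (-(m - 1))) :
    ∀ m n : ℕ, 1 ≤ m → m ≤ n →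
      F m * x (-(n : ℤ)) = x (-((n : ℤ) + (m : ℤ))) + c ^ m * x (-((n : ℤ) - (m : ℤ))) := by
  intro m n hm hmn
  let G : ℕ → R := Function.update F 0 2
  have hGrec : ∀ k, G (k + 2) = G (k + 1) * s - c * G k := by
    rintro (_ | k)
    · simp [G, hF1, hF2, two_mul, mul_two]
    · simpa [G] using hFrec (k + 2) (by omega)
  have key := chebyshev_mul_eq_of_three_term (y := fun k => x (-k)) hc (by simp [G])
    (by simp [G, hF1]) hGrec hexch m n (by exact_mod_cast hmn)
  simpa [G, Function.update_of_ne (show m ≠ 0 by omega)] using key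

/-- First branch of Theorem 3.12(1): F m x_{-n} = x_{-(n+m)} + c^m x_{-(n-m)}
for 1 ≤ m ≤ n. -/
theorem Fm_times_negative_cluster_variable
    (R : Type*) [Ring R] (c s : R)
    (hc : ∀ r : R, c * r = r * c)
    (x : ℤ → R)
    (F : ℕ → R) (hF0 : F 0 = 1) (hF1 : F 1 = s)
    (hF2 : F 2 = s * s - 2 * c)
    (hFrec : ∀ n : ℕ, 2 ≤ n → F (n + 1) = F n * s - c * F (n - 1))
    (hexch : ∀ m : ℤ, 1 ≤ m → s * x (-m) = x (-(m + 1)) + c * x (-(m - 1)))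
    (hbase : ∀ n : ℤ, 1 ≤ n → F 1 * x (-n) = x (-(n + 1)) + c * x (-(n - 1))) :
    ∀ m n : ℕ, 1 ≤ m → m ≤ n →
      F m * x (-(n : ℤ)) = x (-((n : ℤ) + (m : ℤ))) + c ^ m * x (-((n : ℤ) - (m : ℤ))) :=
  Fm_times_negative_cluster_variable_general R c s hc x F hF1 hF2 hFrec hexch
end

section
/- In a commutative polynomial ring ℤ[x₁, x₂, y₁, y₂] localized at x₁x₂y₁y₂, define the Kronecker cluster algebra with principal coefficients by the exchange recursions x_{m+1} x_{m-1} = x_m² + (monomial coefficient as in the paper specialized at q = 1). Define S_n and F_n by the recursions S₀ = F₀ = 1, S₁ = F₁ = X_δ := x₀x₃ - x₁x₂y₂, S_{n+1} = S_n S₁ - y₁y₂ S_{n-1}, F₂ = F₁² - 2y₁y₂, F_{n+1} = F_n F₁ - y₁y₂ F_{n-1}. Then S_m S_n = ∑_{k=0}^{min(m,n)} (y₁y₂)^k S_{m+n-2k} and F_m S_n = S_{m+n} + (y₁y₂)^m S_{n-m} for n ≥ m ≥ 1. -/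
/-!
`S` is the sequence of Chebyshev polynomials of the second kind in `S 1`, with parameter
`y = y₁y₂`, and `F` that of the first kind; the two are related by `F (m + 2) = S (m + 2) - y S m`.
The Clebsch–Gordan rule for `S m * S n` follows by two-step induction on `m`: multiply the
recursion for `S (m + 2)` by `S n`, expand `S 1 * S n`, and match the resulting sums by peeling
off their extreme terms. The formula for `F m * S n` is then a difference of two Clebsch–Gordan
sums, which telescopes to its two outer terms.
-/

open Finset

namespace ChebyshevRec

variable {R : Type*} [CommRing R] (y : R) (S : ℕ → R)

def clebschGordan (m n : ℕ) : R :=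
  ∑ k ∈ range (m + 1), y ^ k * S (m + n - 2 * k)

@[simp]
lemma clebschGordan_zero_left (n : ℕ) : clebschGordan y S 0 n = S n := by
  simp [clebschGordan]

lemma clebschGordan_succ_succ (m n : ℕ) :
    clebschGordan y S (m + 1) (n + 1) = S (m + 1 + (n + 1)) + y * clebschGordan y S m n := by
  rw [clebschGordan, sum_range_succ', clebschGordan, mul_sum, add_comm]
  congr 1
  · simp
  · refine sum_congr rfl fun k _ => ?_
    rw [pow_succ, show m + 1 + (n + 1) - 2 * (k + 1) = m + n - 2 * k by omega]
    ring

lemma clebschGordan_succ_succ' (m n : ℕ) :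
    clebschGordan y S (m + 1) (n + 1) = clebschGordan y S m (n + 2) + y ^ (m + 1) * S (n - m) := by
  rw [clebschGordan, sum_range_succ, clebschGordan,
    show m + 1 + (n + 1) - 2 * (m + 1) = n - m by omega, show m + 1 + (n + 1) = m + (n + 2) by omega]

variable {y S} (hS0 : S 0 = 1) (hS : ∀ n, S (n + 2) = S (n + 1) * S 1 - y * S n)
include hS0 hS

theorem mul_eq_clebschGordan {m n : ℕ} (hmn : m ≤ n) : S m * S n = clebschGordan y S m n := by
  induction m using Nat.twoStepInduction generalizing n with
  | zero => simp [hS0]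
  | one =>
    obtain ⟨n, rfl⟩ : ∃ k, n = k + 1 := ⟨n - 1, by omega⟩
    rw [clebschGordan_succ_succ, clebschGordan_zero_left, zero_add, add_comm 1, hS]
    ring
  | more m ihm ihm1 =>
    obtain ⟨n, rfl⟩ : ∃ k, n = k + 2 := ⟨n - 2, by omega⟩
    have h₁ : S (m + 1) * S (n + 3) = clebschGordan y S (m + 1) (n + 3) := ihm1 (by omega)
    have h₂ : S (m + 1) * S (n + 1) = clebschGordan y S (m + 1) (n + 1) := ihm1 (by omega)
    have h₃ : S m * S (n + 2) = clebschGordan y S m (n + 2) := ihm (by omega)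
    have hpeel₁ : clebschGordan y S (m + 2) (n + 2) =
        clebschGordan y S (m + 1) (n + 3) + y ^ (m + 2) * S (n - m) := by
      simpa using clebschGordan_succ_succ' y S (m + 1) (n + 1)
    have hpeel₂ := clebschGordan_succ_succ' y S m n
    linear_combination S (n + 2) * hS m - S (m + 1) * hS (n + 1) + h₁ + y * h₂ - y * h₃
      - hpeel₁ + y * hpeel₂

theorem mul_eq_sum_range_min (m n : ℕ) :
    S m * S n = ∑ k ∈ range (min m n + 1), y ^ k * S (m + n - 2 * k) := by
  rcases le_total m n with h | h
  · rw [min_eq_left h, mul_eq_clebschGordan hS0 hS h, clebschGordan]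
  · rw [min_eq_right h, mul_comm, mul_eq_clebschGordan hS0 hS h, clebschGordan, add_comm n m]

variable {F : ℕ → R} (hF1 : F 1 = S 1) (hF2 : F 2 = F 1 ^ 2 - 2 * y)
  (hF : ∀ n, F (n + 3) = F (n + 2) * F 1 - y * F (n + 1))
include hF1 hF2 hF

theorem firstKind_eq_sub (m : ℕ) : F (m + 2) = S (m + 2) - y * S m := by
  rw [hF1] at hF hF2
  induction m using Nat.twoStepInduction with
  | zero => rw [hF2, hS 0, hS0]; ring
  | one => rw [hF 0, hF2, hF1, hS 1, hS 0, hS0]; ring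
  | more m ihm ihm1 =>
    linear_combination hF (m + 1) + S 1 * ihm1 - y * ihm - hS (m + 2) + y * hS m

theorem firstKind_mul_eq {m n : ℕ} (hm : 1 ≤ m) (hmn : m ≤ n) :
    F m * S n = S (m + n) + y ^ m * S (n - m) := by
  obtain ⟨n, rfl⟩ : ∃ k, n = k + 1 := ⟨n - 1, by omega⟩
  rcases m with _ | _ | m
  · omega
  · rw [hF1, mul_eq_clebschGordan hS0 hS hmn, clebschGordan_succ_succ, clebschGordan_zero_left,
      pow_one, Nat.add_sub_cancel]
  · obtain ⟨n, rfl⟩ : ∃ k, n = k + 1 := ⟨n - 1, by omega⟩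
    have hsucc : clebschGordan y S (m + 2) (n + 2) =
        S (m + 2 + (n + 2)) + y * clebschGordan y S (m + 1) (n + 1) :=
      clebschGordan_succ_succ y S (m + 1) (n + 1)
    have hpeel := clebschGordan_succ_succ' y S m n
    rw [firstKind_eq_sub hS0 hS hF1 hF2 hF, show n + 2 - (m + 2) = n - m by omega]
    linear_combination mul_eq_clebschGordan hS0 hS hmn
      - y * mul_eq_clebschGordan hS0 hS (m := m) (n := n + 2) (by omega) + hsucc + y * hpeel

end ChebyshevRec

theorem classical_kronecker_chebyshev_products_general
    (R : Type*) [CommRing R] (y₁ y₂ : R)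
    (S F : ℕ → R)
    (hS0 : S 0 = 1)
    (hSrec : ∀ n : ℕ, 1 ≤ n → S (n + 1) = S n * S 1 - y₁ * y₂ * S (n - 1))
    (hF1 : F 1 = S 1)
    (hF2 : F 2 = F 1 ^ 2 - 2 * (y₁ * y₂))
    (hFrec : ∀ n : ℕ, 2 ≤ n → F (n + 1) = F n * F 1 - y₁ * y₂ * F (n - 1)) :
    (∀ m n : ℕ, S m * S n =
      ∑ k ∈ Finset.range (min m n + 1), (y₁ * y₂) ^ k * S (m + n - 2 * k)) ∧
    (∀ m n : ℕ, 1 ≤ m → m ≤ n →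
      F m * S n = S (m + n) + (y₁ * y₂) ^ m * S (n - m)) := by
  have hS (n : ℕ) : S (n + 2) = S (n + 1) * S 1 - y₁ * y₂ * S n := by
    simpa using hSrec (n + 1) (by omega)
  have hF (n : ℕ) : F (n + 3) = F (n + 2) * F 1 - y₁ * y₂ * F (n + 1) := by
    simpa using hFrec (n + 2) (by omega)
  exact ⟨ChebyshevRec.mul_eq_sum_range_min hS0 hS,
    fun m n hm hmn => ChebyshevRec.firstKind_mul_eq hS0 hS hF1 hF2 hF hm hmn⟩

/-- q = 1 specialization: in the classical Kronecker cluster algebra with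
principal coefficients, the Chebyshev elements S_n and F_n built on
X_δ = x₀x₃ - x₁x₂y₂ satisfy the product formulas
S m S n = ∑_{k=0}^{min(m,n)} (y₁y₂)^k S_{m+n-2k} and
F m S n = S_{m+n} + (y₁y₂)^m S_{n-m} for n ≥ m ≥ 1. -/
theorem classical_kronecker_chebyshev_products
    (R : Type*) [CommRing R] (x₀ x₁ x₂ x₃ y₁ y₂ : R)
    (S F : ℕ → R)
    (hS0 : S 0 = 1) (hS1 : S 1 = x₀ * x₃ - x₁ * x₂ * y₂)
    (hSrec : ∀ n : ℕ, 1 ≤ n → S (n + 1) = S n * S 1 - y₁ * y₂ * S (n - 1))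
    (hF0 : F 0 = 1) (hF1 : F 1 = S 1)
    (hF2 : F 2 = F 1 ^ 2 - 2 * (y₁ * y₂))
    (hFrec : ∀ n : ℕ, 2 ≤ n → F (n + 1) = F n * F 1 - y₁ * y₂ * F (n - 1)) :
    (∀ m n : ℕ, S m * S n =
      ∑ k ∈ Finset.range (min m n + 1), (y₁ * y₂) ^ k * S (m + n - 2 * k)) ∧
    (∀ m n : ℕ, 1 ≤ m → m ≤ n →
      F m * S n = S (m + n) + (y₁ * y₂) ^ m * S (n - m)) :=
  classical_kronecker_chebyshev_products_general R y₁ y₂ S F hS0 hSrec hF1 hF2 hFrec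
end
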